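/- arXiv:2005.00772 — 2 statements merged into one kernel-verified Lean document; each statement's English description precedes it below -/
import Mathlib

section
/- For all natural numbers n, λ and μ, ∑_{k=0}^{n} (−1)^k · binom(n,k) · [binom(2k+2λ, k+λ) · binom(2n−2k+2μ, n−k+μ)] / [binom(k+2λ, λ) · binom(n−k+2μ, μ)] equals χ(n even) · [binom(n, n/2) · binom(n+λ+μ, n/2)] / [binom(λ+n/2, λ) · binom(μ+n/2, μ)], as an equality of rational numbers (the sum vanishes when n is odd, and for even n the right-hand side uses n/2). -/
/-!
With `w_λ(k) = C(2k+2λ, k+λ) / C(k+2λ, λ)` the sum is the alternating binomial convolution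
`S(n) = ∑ₖ (-1)ᵏ C(n,k) w_λ(k) w_μ(n-k)` of two hypergeometric sequences, since
`w_λ(k+1) / w_λ(k) = 2(2k+2λ+1) / (k+2λ+1)`. Creative telescoping (Zeilberger's algorithm) gives
the second-order recurrence `A(n) S(n+2) = B(n) S(n)`: for the summand `F(n,k)` and a rational
certificate `R(n,k)`, `A(n) F(n+2,k) - B(n) F(n,k) = R(n,k) F(n+2,k) - R(n,k+1) F(n+2,k+1)`,
so the sum telescopes up to two boundary terms that cancel. The closed form obeys the same
recurrence, because its consecutive even values have ratio `B/A` and its odd values vanish;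
`S(0) = 1` and `S(1) = w_μ(1) - w_λ(1) = 0` fix the solution.
-/

open Finset

namespace AlternatingBinomialConvolution

section CastChoose

variable {K : Type*} [Field K] [CharZero K]

lemma cast_choose_succ_succ (n k : ℕ) :
    ((n + 1).choose (k + 1) : K) = (n + 1) * n.choose k / (k + 1) := by
  rw [eq_div_iff (by exact_mod_cast k.succ_ne_zero)]
  exact_mod_cast (Nat.add_one_mul_choose_eq n k).symm

lemma cast_choose_add_succ (a b : ℕ) :
    ((a + b + 1).choose a : K) = (a + b + 1) * (a + b).choose a / (b + 1) := by
  rw [eq_div_iff (by exact_mod_cast b.succ_ne_zero)]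
  have := Nat.choose_mul_succ_eq (a + b) a
  rw [show a + b + 1 - a = b + 1 by omega] at this
  exact_mod_cast this.symm.trans (mul_comm _ _)

end CastChoose

def binomQuot (l k : ℕ) : ℚ :=
  ((2 * k + 2 * l).choose (k + l) : ℚ) / ((k + 2 * l).choose l : ℚ)

lemma cast_choose_add_two_mul_pos (l k : ℕ) : 0 < ((k + 2 * l).choose l : ℚ) := by
  exact_mod_cast Nat.choose_pos (by omega)

lemma binomQuot_zero (l : ℕ) : binomQuot l 0 = 1 := by
  simpa [binomQuot] using div_self (cast_choose_add_two_mul_pos l 0).ne'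

lemma binomQuot_succ (l k : ℕ) :
    binomQuot l (k + 1) = 2 * (2 * k + 2 * l + 1) / (k + 2 * l + 1) * binomQuot l k := by
  have hden := cast_choose_add_two_mul_pos l k
  unfold binomQuot
  rw [show 2 * (k + 1) + 2 * l = k + l + (k + l) + 1 + 1 by ring,
    show k + 1 + l = k + l + 1 by ring,
    cast_choose_succ_succ, cast_choose_add_succ, show k + 1 + 2 * l = l + (k + l) + 1 by ring,
    cast_choose_add_succ, show l + (k + l) = k + 2 * l by ring,
    show k + l + (k + l) = 2 * k + 2 * l by ring]
  push_cast
  field_simp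
  ring

lemma binomQuot_one (l : ℕ) : binomQuot l 1 = 2 := by
  rw [binomQuot_succ, binomQuot_zero]
  field_simp
  ring

def convTerm (l m k j : ℕ) : ℚ :=
  (-1) ^ k * ((k + j).choose k : ℚ) * binomQuot l k * binomQuot m j

lemma convTerm_succ_right (l m k j : ℕ) :
    convTerm l m k (j + 1)
      = 2 * (k + j + 1) * (2 * j + 2 * m + 1) / ((j + 1) * (j + 2 * m + 1)) * convTerm l m k j := by
  unfold convTerm
  rw [← add_assoc, cast_choose_add_succ, binomQuot_succ]
  field_simp

lemma convTerm_succ_left (l m k j : ℕ) :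
    convTerm l m (k + 1) j
      = -(2 * (k + j + 1) * (2 * k + 2 * l + 1)) / ((k + 1) * (k + 2 * l + 1))
        * convTerm l m k j := by
  unfold convTerm
  rw [pow_succ, add_right_comm, cast_choose_succ_succ, binomQuot_succ]
  push_cast
  field_simp

def coeffA (l m n : ℕ) : ℚ := (n + 2 * l + 2 * m + 2) * (n + 2 * l + 2) * (n + 2 * m + 2)

def coeffB (l m n : ℕ) : ℚ := 16 * (n + 1) * (n + l + m + 1) * (n + l + m + 2)

lemma coeffA_ne_zero (l m n : ℕ) : coeffA l m n ≠ 0 := by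
  unfold coeffA; positivity

/-- Found by Zeilberger's algorithm and written in `k` and `j = n - k`: the certificate is
`R(n,k) = k (k+2λ) certPoly(k, n-k) / ((n+2)(2(n-k)+2μ+3))`. -/
def certPoly (l m k j : ℚ) : ℚ :=
  (2 * j + 2 * m + 3) * k ^ 2
    + (6 * j ^ 2 + 4 * j * l + 12 * j * m + 20 * j + 4 * l * m + 6 * l + 8 * m ^ 2 + 20 * m
      + 16) * k
    + 4 * j ^ 3 + 6 * j ^ 2 * l + 12 * j ^ 2 * m + 21 * j ^ 2 + 12 * j * l * m + 20 * j * l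
    + 16 * j * m ^ 2 + 42 * j * m + 36 * j + 8 * l * m ^ 2 + 20 * l * m + 16 * l
    + 8 * m ^ 3 + 28 * m ^ 2 + 36 * m + 20

-- `n - k` is taken in `ℚ`: the boundary term uses `k = n + 1`.
def certificate (l m n k : ℕ) : ℚ :=
  k * (k + 2 * l) * certPoly l m k (n - k) / ((n + 2) * (2 * ((n : ℚ) - k) + 2 * m + 3))

lemma convTerm_telescoping (l m k j : ℕ) :
    coeffA l m (k + j) * convTerm l m k (j + 2) - coeffB l m (k + j) * convTerm l m k j
      = certificate l m (k + j) k * convTerm l m k (j + 2)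
        - certificate l m (k + j) (k + 1) * convTerm l m (k + 1) (j + 1) := by
  have hcert₀ : certificate l m (k + j) k
      = k * (k + 2 * l) * certPoly l m k j / ((k + j + 2) * (2 * j + 2 * m + 3)) := by
    unfold certificate; push_cast; ring_nf
  have hcert₁ : certificate l m (k + j) (k + 1) = (k + 1) * (k + 1 + 2 * l)
      * certPoly l m (k + 1) (j - 1) / ((k + j + 2) * (2 * j + 2 * m + 1)) := by
    unfold certificate; push_cast; ring_nf
  have hT₀ : convTerm l m k j
      = (j + 1) * (j + 2 * m + 1) / (2 * (k + j + 1) * (2 * j + 2 * m + 1))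
        * convTerm l m k (j + 1) := by
    rw [convTerm_succ_right]; field_simp
  have hT₂ : convTerm l m k (j + 2)
      = 2 * (k + j + 2) * (2 * j + 2 * m + 3) / ((j + 2) * (j + 2 * m + 2))
        * convTerm l m k (j + 1) := by
    rw [convTerm_succ_right]; push_cast; ring
  have hT₁₁ : convTerm l m (k + 1) (j + 1)
      = -(2 * (k + j + 2) * (2 * k + 2 * l + 1)) / ((k + 1) * (k + 2 * l + 1))
        * convTerm l m k (j + 1) := by
    rw [convTerm_succ_left]; push_cast; ring
  rw [hcert₀, hcert₁, hT₀, hT₂, hT₁₁]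
  unfold coeffA coeffB
  push_cast
  field_simp
  unfold certPoly
  ring

lemma convTerm_boundary (l m n : ℕ) :
    coeffA l m n * (convTerm l m (n + 1) 1 + convTerm l m (n + 2) 0)
      = certificate l m n (n + 1) * convTerm l m (n + 1) 1 := by
  have hcert : certificate l m n (n + 1)
      = (n + 1) * (n + 1 + 2 * l) * certPoly l m (n + 1) (-1) / ((n + 2) * (2 * m + 1)) := by
    unfold certificate; push_cast; ring_nf
  have hT₁ : convTerm l m (n + 1) 1 = 2 * (n + 2) * convTerm l m (n + 1) 0 := by
    rw [convTerm_succ_right]; push_cast; field_simp; ring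
  have hT₂ : convTerm l m (n + 2) 0
      = -(2 * (n + 2) * (2 * n + 2 * l + 3)) / ((n + 2) * (n + 2 * l + 2))
        * convTerm l m (n + 1) 0 := by
    rw [convTerm_succ_left]; push_cast; ring
  rw [hcert, hT₁, hT₂]
  unfold coeffA
  field_simp
  unfold certPoly
  ring

def convSum (l m n : ℕ) : ℚ := ∑ k ∈ range (n + 1), convTerm l m k (n - k)

lemma convSum_recurrence (l m n : ℕ) :
    coeffA l m n * convSum l m (n + 2) = coeffB l m n * convSum l m n := by
  set f : ℕ → ℚ := fun k => certificate l m n k * convTerm l m k (n + 2 - k)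
  have htel : ∑ k ∈ range (n + 1),
      (coeffA l m n * convTerm l m k (n + 2 - k) - coeffB l m n * convTerm l m k (n - k))
        = f 0 - f (n + 1) := by
    rw [← sum_range_sub']
    refine sum_congr rfl fun k hk => ?_
    obtain ⟨j, rfl⟩ := Nat.exists_eq_add_of_le (Nat.lt_succ_iff.mp (mem_range.mp hk))
    simp only [f, show k + j + 2 - k = j + 2 by omega, show k + j - k = j by omega,
      show k + j + 2 - (k + 1) = j + 1 by omega]
    exact convTerm_telescoping l m k j
  have hf₀ : f 0 = 0 := by simp [f, certificate]
  have hf : f (n + 1) = certificate l m n (n + 1) * convTerm l m (n + 1) 1 := by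
    simp only [f, show n + 2 - (n + 1) = 1 by omega]
  have hsplit : convSum l m (n + 2) = ∑ k ∈ range (n + 1), convTerm l m k (n + 2 - k)
      + convTerm l m (n + 1) 1 + convTerm l m (n + 2) 0 := by
    simp [convSum, sum_range_succ]
  rw [sum_sub_distrib, ← mul_sum, ← mul_sum, hf₀, hf] at htel
  rw [hsplit, convSum]
  linear_combination htel + convTerm_boundary l m n

def closedForm (l m n : ℕ) : ℚ :=
  (if Even n then 1 else 0) * ((n.choose (n / 2) : ℚ) * ((n + l + m).choose (n / 2) : ℚ))
    / (((l + n / 2).choose l : ℚ) * ((m + n / 2).choose m : ℚ))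

lemma closedForm_recurrence (l m n : ℕ) :
    coeffA l m n * closedForm l m (n + 2) = coeffB l m n * closedForm l m n := by
  rcases Nat.even_or_odd' n with ⟨h, rfl | rfl⟩
  · simp only [closedForm, even_two_mul, show Even (2 * h + 2) from ⟨h + 1, by ring⟩, if_true,
      one_mul, show (2 * h + 2) / 2 = h + 1 by omega, Nat.mul_div_cancel_left h two_pos]
    have hcentral : ((2 * h + 2).choose (h + 1) : ℚ)
        = 2 * (2 * h + 1) * (2 * h).choose h / (h + 1) := by
      rw [show 2 * h + 2 = h + h + 1 + 1 by ring, cast_choose_succ_succ, cast_choose_add_succ,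
        ← two_mul]
      push_cast; field_simp; ring
    have hupper : ((2 * h + 2 + l + m).choose (h + 1) : ℚ)
        = (2 * h + l + m + 2) * (2 * h + l + m + 1)
        * (2 * h + l + m).choose h / ((h + 1) * (h + l + m + 1)) := by
      rw [show 2 * h + 2 + l + m = h + (h + l + m) + 1 + 1 by ring, cast_choose_succ_succ,
        cast_choose_add_succ, show h + (h + l + m) = 2 * h + l + m by ring]
      push_cast; field_simp; ring
    have hlower (a : ℕ) :
        ((a + (h + 1)).choose a : ℚ) = (a + h + 1) * (a + h).choose a / (h + 1) := by
      rw [← add_assoc, cast_choose_add_succ]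
    rw [hcentral, hupper, hlower, hlower]
    unfold coeffA coeffB
    push_cast
    field_simp
    ring
  · have hodd : ¬ Even (2 * h + 1) := Nat.not_even_iff_odd.mpr (odd_two_mul_add_one h)
    have hodd' : ¬ Even (2 * h + 1 + 2) := Nat.not_even_iff_odd.mpr ⟨h + 1, by ring⟩
    simp [closedForm, hodd, hodd']

lemma eq_of_two_step_recurrence {M : Type*} [MonoidWithZero M] [IsLeftCancelMulZero M]
    {a b f g : ℕ → M} (ha : ∀ n, a n ≠ 0) (hf : ∀ n, a n * f (n + 2) = b n * f n)
    (hg : ∀ n, a n * g (n + 2) = b n * g n) (h0 : f 0 = g 0) (h1 : f 1 = g 1) : f = g := by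
  funext n
  induction n using Nat.twoStepInduction with
  | zero => exact h0
  | one => exact h1
  | more n ih _ => exact mul_left_cancel₀ (ha n) (by rw [hf, hg, ih])

lemma convSum_eq_closedForm (l m : ℕ) : convSum l m = closedForm l m := by
  refine eq_of_two_step_recurrence (coeffA_ne_zero l m) (convSum_recurrence l m)
    (closedForm_recurrence l m) ?_ ?_
  · simp [convSum, convTerm, closedForm, binomQuot_zero]
  · simp [convSum, convTerm, closedForm, sum_range_succ, binomQuot_zero, binomQuot_one]

end AlternatingBinomialConvolution

open AlternatingBinomialConvolution in
/-- Theorem E: alternating convolution of quotients of binomial coefficients. -/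
theorem stmt_4 (n lam mu : ℕ) :
    ∑ k ∈ Finset.range (n + 1),
        (-1 : ℚ) ^ k * (n.choose k : ℚ) *
          (((2 * k + 2 * lam).choose (k + lam) : ℚ) * ((2 * n - 2 * k + 2 * mu).choose (n - k + mu) : ℚ))
          / (((k + 2 * lam).choose lam : ℚ) * ((n - k + 2 * mu).choose mu : ℚ))
      = (if Even n then 1 else 0) *
          ((n.choose (n / 2) : ℚ) * ((n + lam + mu).choose (n / 2) : ℚ))
          / (((lam + n / 2).choose lam : ℚ) * ((mu + n / 2).choose mu : ℚ)) := by
  rw [← closedForm, ← convSum_eq_closedForm, convSum]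
  refine sum_congr rfl fun k hk => ?_
  obtain ⟨j, rfl⟩ := Nat.exists_eq_add_of_le (Nat.lt_succ_iff.mp (mem_range.mp hk))
  rw [show 2 * (k + j) - 2 * k = 2 * j by omega, Nat.add_sub_cancel_left, convTerm, binomQuot,
    binomQuot]
  ring
end

section
/- Let n be a natural number and let c, e, λ be real numbers with λ ≠ 0, (λ)_n ≠ 0, (1−c−n)_n ≠ 0 and (1−e−n)_n ≠ 0. Then the terminating hypergeometric sum ∑_{k=0}^{n} (−n)_k (c)_k (e)_k (1+λ)_k / ((1−c−n)_k (1−e−n)_k (λ)_k · k!) equals [(−n)_{⌊n/2⌋} (1−c−e−n)_{⌊n/2⌋} / ((1−c−n)_{⌊n/2⌋} (1−e−n)_{⌊n/2⌋})] multiplied by (2λ+n)/(2λ) if n is even, and by −(1+n)/(2λ) if n is odd. -/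
/-!
Since `(1+λ)_k / (λ)_k = (λ+k)/λ`, `(-n)_k / k! = (-1)^k C(n,k)` and
`(c)_k / (1-c-n)_k = (-1)^k (c)_k (c)_{n-k} / (c)_n`, the sum equals
`(λ A_n + M_n) / (λ (c)_n (e)_n)`, where `A_n = ∑ (-1)^k C(n,k) w_k w_{n-k}` with
`w_k = (c)_k (e)_k`, and `M_n` is the same sum weighted by `k`. The symmetry `k ↔ n - k` gives
`A_n = 0` for odd `n` and `M_n = (n/2) A_n` for even `n`; for odd `n`, absorbing the factor `k`
into `C(n,k)` turns `M_n` into the sum `B_{n-1}` with `w_{k+1}` in place of `w_k`. The values of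
`A_{2m}` and `B_{2m}` (Dixon's identity) follow by a joint induction on `m`, with `c, e` shifted
by one, from Pascal's rule and `w_{i+1} = (c+i)(e+i) w_i`; the constant `(m+1)_m = (2m)!/m!` is,
up to sign, `(-n)_{⌊n/2⌋}`.
-/

/-- Real Pochhammer symbol: `(x)_0 = 1`, `(x)_n = x(x+1)⋯(x+n-1)`. -/
def poch (x : ℝ) (n : ℕ) : ℝ := ∏ i ∈ Finset.range n, (x + i)

open Finset

lemma poch_succ_right (x : ℝ) (n : ℕ) : poch x (n + 1) = poch x n * (x + n) :=
  prod_range_succ _ _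

lemma poch_add (x : ℝ) (m n : ℕ) : poch x (m + n) = poch x m * poch (x + m) n := by
  simp only [poch, prod_range_add, Nat.cast_add, add_assoc]

lemma poch_succ_left (x : ℝ) (n : ℕ) : poch x (n + 1) = x * poch (x + 1) n := by
  rw [add_comm n, poch_add]
  simp [poch]

lemma poch_ne_zero_of_le {x : ℝ} {m n : ℕ} (h : poch x n ≠ 0) (hmn : m ≤ n) :
    poch x m ≠ 0 := by
  obtain ⟨d, rfl⟩ := Nat.exists_eq_add_of_le hmn
  exact left_ne_zero_of_mul (poch_add x m d ▸ h)

lemma poch_one_sub_sub (x : ℝ) (n : ℕ) : poch (1 - x - n) n = (-1) ^ n * poch x n := by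
  have h (i) (hi : i ∈ range n) : 1 - x - n + (n - 1 - i : ℕ) = -1 * (x + i) := by
    have : 1 + i ≤ n := by rw [mem_range] at hi; omega
    rw [Nat.sub_sub, Nat.cast_sub this]
    push_cast
    ring
  rw [poch, ← prod_range_reflect, prod_congr rfl h, prod_mul_distrib, prod_const, card_range,
    poch]

lemma poch_neg_natCast (n k : ℕ) : poch (-n) k = (-1) ^ k * n.descFactorial k := by
  induction k with
  | zero => simp [poch]
  | succ k ih =>
    rw [poch_succ_right, ih, Nat.descFactorial_succ]
    rcases le_or_gt k n with hk | hk
    · push_cast [hk]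
      ring
    · simp [Nat.descFactorial_eq_zero_iff_lt.mpr hk]

lemma poch_natCast_central_succ (m : ℕ) :
    poch ((m : ℝ) + 2) (m + 1) = 2 * (2 * m + 1) * poch ((m : ℝ) + 1) m := by
  have h := poch_succ_left ((m : ℝ) + 1) (m + 1)
  rw [poch_succ_right, poch_succ_right] at h
  have hm : (m : ℝ) + 1 ≠ 0 := by positivity
  apply mul_left_cancel₀ hm
  rw [show (m : ℝ) + 1 + 1 = m + 2 by ring] at h
  push_cast at h
  linear_combination -h

section AltBinomConv

variable {R : Type*} [CommRing R]

def altBinomConv (f g : ℕ → R) (ν : ℕ) : R :=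
  ∑ k ∈ range (ν + 1), (ν.choose k : R) * ((-1) ^ k * f k * g (ν - k))

lemma altBinomConv_comm (f g : ℕ → R) (ν : ℕ) :
    altBinomConv f g ν = (-1) ^ ν * altBinomConv g f ν := by
  rw [altBinomConv, ← sum_range_reflect, altBinomConv, mul_sum]
  refine sum_congr rfl fun k hk => ?_
  have hk : k ≤ ν := by rw [mem_range] at hk; omega
  have hsign : (-1 : R) ^ ν * (-1) ^ k = (-1) ^ (ν - k) := by
    rw [← Nat.sub_add_cancel hk, pow_add, Nat.add_sub_cancel, mul_assoc, ← mul_pow]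
    simp
  rw [Nat.add_sub_cancel, Nat.choose_symm hk, Nat.sub_sub_self hk, ← hsign]
  ring

lemma altBinomConv_succ (f g : ℕ → R) (ν : ℕ) :
    altBinomConv f g (ν + 1) =
      altBinomConv f (fun i => g (i + 1)) ν - altBinomConv (fun i => f (i + 1)) g ν := by
  refine (sum_choose_succ_mul (fun i j => (-1) ^ i * f i * g j) ν).trans ?_
  rw [altBinomConv, altBinomConv, sub_eq_add_neg, ← sum_neg_distrib]
  congr 1 <;> refine sum_congr rfl fun k hk => ?_
  · rw [Nat.sub_add_comm (by simpa [Nat.lt_succ_iff] using hk)]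
  · ring

lemma altBinomConv_natCast_mul_succ (f g : ℕ → R) (ν : ℕ) :
    altBinomConv (fun k => k * f k) g (ν + 1) =
      -(ν + 1) * altBinomConv (fun i => f (i + 1)) g ν := by
  rw [altBinomConv, sum_range_succ', altBinomConv, mul_sum]
  simp only [Nat.cast_zero, zero_mul, mul_zero, add_zero, Nat.add_sub_add_right]
  refine sum_congr rfl fun k _ => ?_
  have h := congrArg (Nat.cast : ℕ → R) (Nat.add_one_mul_choose_eq ν k)
  push_cast at h ⊢
  linear_combination ((-1) ^ k * f (k + 1) * g (ν - k)) * h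

lemma altBinomConv_natCast_mul_add (f g : ℕ → R) (ν : ℕ) :
    altBinomConv (fun k => k * f k) g ν + altBinomConv f (fun k => k * g k) ν =
      ν * altBinomConv f g ν := by
  rw [altBinomConv, altBinomConv, altBinomConv, ← sum_add_distrib, mul_sum]
  refine sum_congr rfl fun k hk => ?_
  rw [Nat.cast_sub (by rw [mem_range] at hk; omega)]
  ring

lemma altBinomConv_shift_sub_shift {f g : ℕ → R} {p q r s : R}
    (hf : ∀ i, f (i + 1) = (p + i) * (q + i) * f i)
    (hg : ∀ i, g (i + 1) = (r + i) * (s + i) * g i) (ν : ℕ) :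
    altBinomConv f (fun i => g (i + 1)) ν - altBinomConv (fun i => f (i + 1)) g ν =
      ((r + ν) * (s + ν) - p * q) * altBinomConv f g ν -
        (p + q + r + s + 2 * ν) * altBinomConv (fun k => k * f k) g ν := by
  simp only [altBinomConv, hf, hg, mul_sum, ← sum_sub_distrib]
  refine sum_congr rfl fun k hk => ?_
  rw [Nat.cast_sub (by rw [mem_range] at hk; omega)]
  ring

lemma altBinomConv_mul_mul (a b : R) (f g : ℕ → R) (ν : ℕ) :
    altBinomConv (fun i => a * f i) (fun i => b * g i) ν = a * b * altBinomConv f g ν := by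
  simp only [altBinomConv, mul_sum]
  refine sum_congr rfl fun k _ => ?_
  ring

end AltBinomConv

section Symmetric

variable {K : Type*} [Field K] [CharZero K]

lemma altBinomConv_self_odd (f : ℕ → K) (m : ℕ) : altBinomConv f f (2 * m + 1) = 0 := by
  have h := altBinomConv_comm f f (2 * m + 1)
  rw [Odd.neg_one_pow ⟨m, rfl⟩] at h
  linear_combination h / 2

lemma altBinomConv_natCast_mul_self_even (f : ℕ → K) (m : ℕ) :
    altBinomConv (fun k => k * f k) f (2 * m) = m * altBinomConv f f (2 * m) := by
  have h := altBinomConv_natCast_mul_add f f (2 * m)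
  rw [altBinomConv_comm f, Even.neg_one_pow ⟨m, by ring⟩] at h
  push_cast at h
  linear_combination h / 2

lemma altBinomConv_succ_self_odd (f : ℕ → K) (m : ℕ) :
    altBinomConv (fun i => f (i + 1)) f (2 * m + 1) = -altBinomConv f f (2 * m + 2) / 2 := by
  have h := altBinomConv_succ f f (2 * m + 1)
  rw [altBinomConv_comm f (fun i => f (i + 1)), Odd.neg_one_pow ⟨m, rfl⟩] at h
  rw [show 2 * m + 1 + 1 = 2 * m + 2 from rfl] at h
  linear_combination h / 2

end Symmetric

def dixonWeight (c e : ℝ) (i : ℕ) : ℝ := poch c i * poch e i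

lemma dixonWeight_succ (c e : ℝ) (i : ℕ) :
    dixonWeight c e (i + 1) = (c + i) * (e + i) * dixonWeight c e i := by
  rw [dixonWeight, dixonWeight, poch_succ_right, poch_succ_right]
  ring

lemma dixonWeight_succ_left (c e : ℝ) (i : ℕ) :
    dixonWeight c e (i + 1) = c * e * dixonWeight (c + 1) (e + 1) i := by
  rw [dixonWeight, dixonWeight, poch_succ_left, poch_succ_left]
  ring

lemma dixonWeight_succ_succ (c e : ℝ) (i : ℕ) :
    dixonWeight c e (i + 1 + 1) = (c + 1 + i) * (e + 1 + i) * dixonWeight c e (i + 1) := by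
  rw [dixonWeight_succ]
  push_cast
  ring

lemma altBinomConv_dixonWeight_two_mul_add_two (c e : ℝ) (m : ℕ) :
    altBinomConv (dixonWeight c e) (dixonWeight c e) (2 * m + 2) =
      2 * (2 * m + 1) * (c + e + 2 * m + 1) *
        altBinomConv (fun i => dixonWeight c e (i + 1)) (dixonWeight c e) (2 * m) := by
  have h := altBinomConv_shift_sub_shift (dixonWeight_succ c e) (dixonWeight_succ c e) (2 * m + 1)
  rw [← altBinomConv_succ, altBinomConv_self_odd, altBinomConv_natCast_mul_succ] at h
  push_cast at h
  linear_combination h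

lemma altBinomConv_succ_dixonWeight_two_mul_add_two (c e : ℝ) (m : ℕ) :
    altBinomConv (fun i => dixonWeight c e (i + 1)) (dixonWeight c e) (2 * m + 2) =
      ((c + 2 * m + 1) * (e + 2 * m + 1) - (c + 1) * (e + 1)) *
          altBinomConv (fun i => dixonWeight c e (i + 1)) (dixonWeight c e) (2 * m + 1) +
        2 * (c + e + 2 * m + 2) * (2 * m + 1) *
          ((c * e) ^ 2 *
              altBinomConv (dixonWeight (c + 1) (e + 1)) (dixonWeight (c + 1) (e + 1)) (2 * m) -
            altBinomConv (fun i => dixonWeight c e (i + 1)) (dixonWeight c e) (2 * m + 1)) := by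
  have hstep := altBinomConv_shift_sub_shift (f := fun i => dixonWeight c e (i + 1))
    (dixonWeight_succ_succ c e) (dixonWeight_succ c e) (2 * m + 1)
  rw [← altBinomConv_succ, altBinomConv_natCast_mul_succ] at hstep
  have hpascal := altBinomConv_succ (fun i => dixonWeight c e (i + 1)) (dixonWeight c e) (2 * m)
  have hdiag : altBinomConv (fun i => dixonWeight c e (i + 1)) (fun i => dixonWeight c e (i + 1))
      (2 * m) = (c * e) ^ 2 *
        altBinomConv (dixonWeight (c + 1) (e + 1)) (dixonWeight (c + 1) (e + 1)) (2 * m) := by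
    simp only [dixonWeight_succ_left c e, altBinomConv_mul_mul]
    ring
  push_cast at hstep
  linear_combination hstep + 2 * (c + e + 2 * m + 2) * (2 * m + 1) * (hdiag + hpascal)

theorem altBinomConv_dixonWeight (m : ℕ) (c e : ℝ) :
    altBinomConv (dixonWeight c e) (dixonWeight c e) (2 * m) =
        poch (m + 1) m * (poch c m * poch e m * poch (c + e + m) m) ∧
      altBinomConv (fun i => dixonWeight c e (i + 1)) (dixonWeight c e) (2 * m) =
        poch (m + 1) m * (poch c (m + 1) * poch e (m + 1) * poch (c + e + m + 1) m) := by
  induction m generalizing c e with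
  | zero => simp [altBinomConv, dixonWeight, poch]
  | succ m ih =>
    obtain ⟨-, hB⟩ := ih c e
    obtain ⟨hA', -⟩ := ih (c + 1) (e + 1)
    have hK : poch ((m + 1 : ℕ) + 1) (m + 1) = 2 * (2 * m + 1) * poch (m + 1) m := by
      rw [← poch_natCast_central_succ]
      push_cast
      ring_nf
    have hA : altBinomConv (dixonWeight c e) (dixonWeight c e) (2 * (m + 1)) =
        poch ((m + 1 : ℕ) + 1) (m + 1) *
          (poch c (m + 1) * poch e (m + 1) * poch (c + e + (m + 1 : ℕ)) (m + 1)) := by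
      have hsplit : poch (c + e + (m + 1 : ℕ)) (m + 1) =
          poch (c + e + m + 1) m * (c + e + 2 * m + 1) := by
        rw [poch_succ_right]
        push_cast
        ring_nf
      rw [mul_add_one, altBinomConv_dixonWeight_two_mul_add_two, hB, hK, hsplit]
      ring
    refine ⟨hA, ?_⟩
    have hsplit : poch (c + e + (m + 1 : ℕ)) (m + 1) =
        (c + e + m + 1) * poch (c + e + m + 2) m := by
      rw [poch_succ_left]
      push_cast
      ring_nf
    have hsplit' : poch (c + e + (m + 1 : ℕ) + 1) (m + 1) =
        poch (c + e + m + 2) m * (c + e + 2 * m + 2) := by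
      rw [poch_succ_right]
      push_cast
      ring_nf
    rw [show c + 1 + (e + 1) + m = c + e + m + 2 by ring] at hA'
    rw [mul_add_one, altBinomConv_succ_dixonWeight_two_mul_add_two, altBinomConv_succ_self_odd,
      ← mul_add_one, hA, hA', hK, hsplit, hsplit', poch_succ_right c (m + 1),
      poch_succ_right e (m + 1), poch_succ_left c, poch_succ_left e]
    push_cast
    ring

lemma poch_eq_neg_one_pow_mul (x : ℝ) {k n : ℕ} (hk : k ≤ n) :
    poch x n = (-1) ^ k * (poch (1 - x - n) k * poch x (n - k)) := by
  have h := poch_one_sub_sub (x + (n - k : ℕ)) k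
  rw [Nat.cast_sub hk, show 1 - (x + (n - k : ℝ)) - k = 1 - x - n by ring] at h
  have hsign : (-1 : ℝ) ^ k * (-1) ^ k = 1 := by
    rw [← mul_pow]
    norm_num
  rw [h, ← Nat.cast_sub hk, ← mul_assoc, ← mul_assoc, hsign, one_mul, mul_comm, ← poch_add,
    Nat.sub_add_cancel hk]

lemma poch_one_add {x : ℝ} (hx : x ≠ 0) (k : ℕ) :
    poch (1 + x) k = poch x k * (x + k) / x := by
  rw [eq_div_iff hx, ← poch_succ_right, poch_succ_left, add_comm 1, mul_comm]

lemma hypergeometric_summand_eq {n k : ℕ} (hk : k ≤ n) {c e lam : ℝ} (hlam : lam ≠ 0)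
    (hlamk : poch lam k ≠ 0) (hc : poch c n ≠ 0) (he : poch e n ≠ 0) :
    poch (-(n : ℝ)) k * poch c k * poch e k * poch (1 + lam) k /
        (poch (1 - c - n) k * poch (1 - e - n) k * poch lam k * k.factorial) =
      n.choose k * ((-1) ^ k * dixonWeight c e k * dixonWeight c e (n - k)) * (lam + k) /
        (lam * (poch c n * poch e n)) := by
  rw [poch_eq_neg_one_pow_mul c hk] at hc ⊢
  rw [poch_eq_neg_one_pow_mul e hk] at he ⊢
  obtain ⟨hc₁, hc₂⟩ := mul_ne_zero_iff.mp (right_ne_zero_of_mul hc)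
  obtain ⟨he₁, he₂⟩ := mul_ne_zero_iff.mp (right_ne_zero_of_mul he)
  rw [poch_neg_natCast, Nat.descFactorial_eq_factorial_mul_choose, Nat.cast_mul,
    poch_one_add hlam, dixonWeight, dixonWeight]
  field_simp
  rcases neg_one_pow_eq_or ℝ k with hs | hs <;> rw [hs] <;> ring

lemma hypergeometric_sum_eq_altBinomConv (n : ℕ) {c e lam : ℝ} (hlam : lam ≠ 0)
    (hlamn : poch lam n ≠ 0) (hc : poch c n ≠ 0) (he : poch e n ≠ 0) :
    ∑ k ∈ range (n + 1),
        poch (-(n : ℝ)) k * poch c k * poch e k * poch (1 + lam) k /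
          (poch (1 - c - n) k * poch (1 - e - n) k * poch lam k * k.factorial) =
      (lam * altBinomConv (dixonWeight c e) (dixonWeight c e) n +
          altBinomConv (fun k => k * dixonWeight c e k) (dixonWeight c e) n) /
        (lam * (poch c n * poch e n)) := by
  rw [altBinomConv, altBinomConv, mul_sum, ← sum_add_distrib, sum_div]
  refine sum_congr rfl fun k hk => ?_
  have hk : k ≤ n := by simpa [Nat.lt_succ_iff] using hk
  rw [hypergeometric_summand_eq hk hlam (poch_ne_zero_of_le hlamn hk) hc he]
  ring

lemma hypergeometric_sum_two_mul (m : ℕ) {c e lam : ℝ} (hlam : lam ≠ 0)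
    (hc : poch c (2 * m) ≠ 0) (he : poch e (2 * m) ≠ 0) :
    (lam * altBinomConv (dixonWeight c e) (dixonWeight c e) (2 * m) +
          altBinomConv (fun k => k * dixonWeight c e k) (dixonWeight c e) (2 * m)) /
        (lam * (poch c (2 * m) * poch e (2 * m))) =
      poch (-((2 * m : ℕ) : ℝ)) m * poch (1 - c - e - (2 * m : ℕ)) m /
          (poch (1 - c - (2 * m : ℕ)) m * poch (1 - e - (2 * m : ℕ)) m) *
        ((2 * lam + (2 * m : ℕ)) / (2 * lam)) := by
  have hsplit (x : ℝ) : poch x (2 * m) = poch x m * poch (x + m) m := by rw [two_mul, poch_add]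
  rw [hsplit] at hc he
  obtain ⟨hc₁, hc₂⟩ := mul_ne_zero_iff.mp hc
  obtain ⟨he₁, he₂⟩ := mul_ne_zero_iff.mp he
  rw [altBinomConv_natCast_mul_self_even, (altBinomConv_dixonWeight m c e).1, hsplit c, hsplit e,
    show -((2 * m : ℕ) : ℝ) = 1 - (m + 1) - m by push_cast; ring,
    show 1 - c - e - ((2 * m : ℕ) : ℝ) = 1 - (c + e + m) - m by push_cast; ring,
    show 1 - c - ((2 * m : ℕ) : ℝ) = 1 - (c + m) - m by push_cast; ring,
    show 1 - e - ((2 * m : ℕ) : ℝ) = 1 - (e + m) - m by push_cast; ring]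
  simp only [poch_one_sub_sub]
  field_simp
  push_cast
  ring

lemma hypergeometric_sum_two_mul_add_one (m : ℕ) {c e lam : ℝ} (hlam : lam ≠ 0)
    (hc : poch c (2 * m + 1) ≠ 0) (he : poch e (2 * m + 1) ≠ 0) :
    (lam * altBinomConv (dixonWeight c e) (dixonWeight c e) (2 * m + 1) +
          altBinomConv (fun k => k * dixonWeight c e k) (dixonWeight c e) (2 * m + 1)) /
        (lam * (poch c (2 * m + 1) * poch e (2 * m + 1))) =
      poch (-((2 * m + 1 : ℕ) : ℝ)) m * poch (1 - c - e - (2 * m + 1 : ℕ)) m /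
          (poch (1 - c - (2 * m + 1 : ℕ)) m * poch (1 - e - (2 * m + 1 : ℕ)) m) *
        -((1 + (2 * m + 1 : ℕ)) / (2 * lam)) := by
  have hsplit (x : ℝ) : poch x (2 * m + 1) = poch x (m + 1) * poch (x + m + 1) m := by
    rw [show 2 * m + 1 = m + 1 + m by ring, poch_add]
    push_cast
    ring_nf
  have hK : poch ((m : ℝ) + 2) m = poch (m + 1) m * (2 * m + 1) / (m + 1) := by
    rw [eq_div_iff (by positivity), show (m : ℝ) + 2 = m + 1 + 1 by ring, mul_comm,
      ← poch_succ_left, poch_succ_right]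
    ring
  rw [hsplit] at hc he
  obtain ⟨hc₁, hc₂⟩ := mul_ne_zero_iff.mp hc
  obtain ⟨he₁, he₂⟩ := mul_ne_zero_iff.mp he
  rw [altBinomConv_self_odd, altBinomConv_natCast_mul_succ, (altBinomConv_dixonWeight m c e).2,
    hsplit c, hsplit e,
    show -((2 * m + 1 : ℕ) : ℝ) = 1 - (m + 2) - m by push_cast; ring,
    show 1 - c - e - ((2 * m + 1 : ℕ) : ℝ) = 1 - (c + e + m + 1) - m by push_cast; ring,
    show 1 - c - ((2 * m + 1 : ℕ) : ℝ) = 1 - (c + m + 1) - m by push_cast; ring,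
    show 1 - e - ((2 * m + 1 : ℕ) : ℝ) = 1 - (e + m + 1) - m by push_cast; ring]
  simp only [poch_one_sub_sub]
  rw [hK]
  field_simp
  push_cast
  ring

/-- Equation (7): evaluation of the terminating
`₄F₃(-n, c, e, 1+λ; 1-c-n, 1-e-n, λ; 1)` series. -/
theorem stmt_7 (n : ℕ) (c e lam : ℝ)
    (hlam : lam ≠ 0)
    (hlamn : poch lam n ≠ 0)
    (hcn : poch (1 - c - n) n ≠ 0)
    (hen : poch (1 - e - n) n ≠ 0) :
    ∑ k ∈ Finset.range (n + 1),
        poch (-(n : ℝ)) k * poch c k * poch e k * poch (1 + lam) k /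
          (poch (1 - c - n) k * poch (1 - e - n) k * poch lam k * k.factorial)
      = (poch (-(n : ℝ)) (n / 2) * poch (1 - c - e - n) (n / 2) /
          (poch (1 - c - n) (n / 2) * poch (1 - e - n) (n / 2)))
        * (if Even n then (2 * lam + n) / (2 * lam) else -((1 + (n : ℝ)) / (2 * lam))) := by
  rw [poch_one_sub_sub] at hcn hen
  rw [hypergeometric_sum_eq_altBinomConv n hlam hlamn (right_ne_zero_of_mul hcn)
    (right_ne_zero_of_mul hen)]
  obtain ⟨m, rfl | rfl⟩ := Nat.even_or_odd' n
  · rw [if_pos (even_two_mul m), Nat.mul_div_cancel_left m two_pos]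
    exact hypergeometric_sum_two_mul m hlam (right_ne_zero_of_mul hcn) (right_ne_zero_of_mul hen)
  · rw [if_neg (Nat.not_even_two_mul_add_one m), show (2 * m + 1) / 2 = m by omega]
    exact hypergeometric_sum_two_mul_add_one m hlam (right_ne_zero_of_mul hcn)
      (right_ne_zero_of_mul hen)
end
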